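/- Let R be a discrete valuation ring with uniformizer t, let A be a commutative R-algebra that is flat as an R-module, and let s ∈ A be a non-zerodivisor on A. Then the quotient A/sA is flat as an R-module if and only if the image of s in A/tA is a non-zerodivisor on A/tA. -/

import Mathlib

/-!
Over a DVR, flatness is torsion-freeness, which only has to be tested against the uniformizer
`t`; so `A ⧸ sA` is flat iff `t` is a non-zerodivisor on `A ⧸ sA`. Since both `s` and `t` are
non-zerodivisors on `A`, the standard swap of a length-two regular sequence shows that this holds
iff `s` is a non-zerodivisor on `A ⧸ tA`: if `s m = t n` then `t n ∈ sA` forces `n = s n'`, and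
cancelling `s` in `s m = s t n'` gives `m ∈ tA`.
-/

open Pointwise

theorem IsDiscreteValuationRing.flat_iff_isSMulRegular {R : Type*} [CommRing R] [IsDomain R]
    [IsDiscreteValuationRing R] {t : R} (ht : Irreducible t) (M : Type*) [AddCommGroup M]
    [Module R M] :
    Module.Flat R M ↔ IsSMulRegular M t := by
  rw [IsDedekindDomain.flat_iff_torsion_eq_bot, ← Submodule.isTorsionFree_iff_torsion_eq_bot]
  refine ⟨fun _ ↦ IsSMulRegular.of_ne_zero ht.ne_zero, fun h ↦ ⟨fun r hr ↦ ?_⟩⟩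
  obtain ⟨n, u, rfl⟩ := eq_unit_mul_pow_irreducible (isRegular_iff_ne_zero.mp hr) ht
  exact (u.isSMulRegular M).mul (h.pow n)

theorem IsSMulRegular.quotSMulTop_swap {R M : Type*} [CommRing R] [AddCommGroup M] [Module R M]
    {x y : R} (hx : IsSMulRegular M x) (hy : IsSMulRegular (QuotSMulTop x M) y) :
    IsSMulRegular (QuotSMulTop y M) x := by
  rw [isSMulRegular_quotient_iff_mem_of_smul_mem] at hy ⊢
  intro m hm
  obtain ⟨n, -, hn⟩ := (Submodule.mem_smul_pointwise_iff_exists _ _ _).mp hm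
  obtain ⟨n', -, rfl⟩ := (Submodule.mem_smul_pointwise_iff_exists _ _ _).mp
    (hy n (hn ▸ Submodule.smul_mem_pointwise_smul _ _ _ trivial))
  rw [smul_comm, eq_comm] at hn
  exact hx hn ▸ Submodule.smul_mem_pointwise_smul _ _ _ trivial

theorem Ideal.span_singleton_eq_smul_top {A : Type*} [CommRing A] (x : A) :
    Ideal.span {x} = x • (⊤ : Submodule A A) := by
  rw [← Submodule.ideal_span_singleton_smul, smul_eq_mul, Ideal.mul_top]

theorem IsSMulRegular.quotient_span_singleton_swap {A : Type*} [CommRing A] {x y : A}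
    (hx : IsSMulRegular A x) (hy : IsSMulRegular (A ⧸ Ideal.span {x}) y) :
    IsSMulRegular (A ⧸ Ideal.span {y}) x := by
  rw [Ideal.span_singleton_eq_smul_top] at hy ⊢
  exact hx.quotSMulTop_swap hy

theorem Ideal.Quotient.mk_mem_nonZeroDivisors_iff {A : Type*} [CommRing A] (I : Ideal A) (a : A) :
    Ideal.Quotient.mk I a ∈ nonZeroDivisors (A ⧸ I) ↔ IsSMulRegular (A ⧸ I) a := by
  rw [← isSMulRegular_algebraMap_iff (A ⧸ I), Ideal.Quotient.algebraMap_eq,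
    mem_nonZeroDivisors_iff_right, isSMulRegular_iff_right_eq_zero_of_smul]
  simp only [smul_eq_mul, mul_comm]

/-- Let `R` be a DVR with uniformizer `t`, let `A` be a flat commutative `R`-algebra,
and let `s ∈ A` be a non-zerodivisor on `A`.  Then `A ⧸ sA` is flat as an `R`-module
if and only if the image of `s` in `A ⧸ tA` is a non-zerodivisor on `A ⧸ tA`. -/
theorem quotient_flat_iff_nonZeroDivisor_on_fiber
    {R : Type*} [CommRing R] [IsDomain R] [IsDiscreteValuationRing R]
    {t : R} (ht : Irreducible t)
    {A : Type*} [CommRing A] [Algebra R A] [Module.Flat R A]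
    {s : A} (hs : s ∈ nonZeroDivisors A) :
    Module.Flat R (A ⧸ Ideal.span {s}) ↔
      Ideal.Quotient.mk (Ideal.span {algebraMap R A t}) s ∈
        nonZeroDivisors (A ⧸ Ideal.span {algebraMap R A t}) := by
  have hs_reg : IsSMulRegular A s := Module.Flat.isSMulRegular_of_nonZeroDivisors hs
  have ht_reg : IsSMulRegular A (algebraMap R A t) :=
    (IsSMulRegular.of_ne_zero ht.ne_zero : IsSMulRegular R t).of_flat
  rw [IsDiscreteValuationRing.flat_iff_isSMulRegular ht, ← isSMulRegular_algebraMap_iff A,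
    Ideal.Quotient.mk_mem_nonZeroDivisors_iff]
  exact ⟨hs_reg.quotient_span_singleton_swap, ht_reg.quotient_span_singleton_swap⟩
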